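/- arXiv:1603.00854 — 6 statements merged into one kernel-verified Lean document; each statement's English description precedes it below -/
import Mathlib

section
/- Let Σ = {A_j : j ∈ J} be a finite set of real n×n matrices. If Σ is LCP then Σ is ℝⁿ-transversal, i.e., N_{J'} + R_{J'} = ℝⁿ for every subset J' ⊆ J. -/
open Filter Topology Matrix

attribute [local instance] Matrix.normedAddCommGroup

/-- Left products `L_m = A_{j_m} ⋯ A_{j_1}` (with `L_0 = I`). -/
noncomputable def leftProd {n k : ℕ} (A : Fin k → Matrix (Fin n) (Fin n) ℝ)
    (j : ℕ → Fin k) : ℕ → Matrix (Fin n) (Fin n) ℝ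
  | 0 => 1
  | m + 1 => A (j m) * leftProd A j m

/-- Right products `R_m = A_{j_1} ⋯ A_{j_m}` (with `R_0 = I`). -/
noncomputable def rightProd {n k : ℕ} (A : Fin k → Matrix (Fin n) (Fin n) ℝ)
    (j : ℕ → Fin k) : ℕ → Matrix (Fin n) (Fin n) ℝ
  | 0 => 1
  | m + 1 => rightProd A j m * A (j m)

/-- Σ is LCP: for every sequence of indices the left products converge. -/
def IsLCP {n k : ℕ} (A : Fin k → Matrix (Fin n) (Fin n) ℝ) : Prop :=
  ∀ j : ℕ → Fin k, ∃ L : Matrix (Fin n) (Fin n) ℝ,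
    Tendsto (leftProd A j) atTop (𝓝 L)

/-- Σ is RCP: for every sequence of indices the right products converge. -/
def IsRCP {n k : ℕ} (A : Fin k → Matrix (Fin n) (Fin n) ℝ) : Prop :=
  ∀ j : ℕ → Fin k, ∃ R : Matrix (Fin n) (Fin n) ℝ,
    Tendsto (rightProd A j) atTop (𝓝 R)

/-- `N_{J'} = ∩_{j ∈ J'} ker (I - A_j)`. -/
noncomputable def Nspace {n k : ℕ} (A : Fin k → Matrix (Fin n) (Fin n) ℝ)
    (J' : Set (Fin k)) : Submodule ℝ (Fin n → ℝ) :=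
  ⨅ j ∈ J', LinearMap.ker (Matrix.mulVecLin (1 - A j))

/-- `R_{J'} = span of ∪_{j ∈ J'} range (I - A_j)`. -/
noncomputable def Rspace {n k : ℕ} (A : Fin k → Matrix (Fin n) (Fin n) ℝ)
    (J' : Set (Fin k)) : Submodule ℝ (Fin n → ℝ) :=
  ⨆ j ∈ J', LinearMap.range (Matrix.mulVecLin (1 - A j))

/-- Σ is 0-transversal: `N_{J'} ∩ R_{J'} = {0}` for every `J' ⊆ J`. -/
def IsZeroTransversal {n k : ℕ} (A : Fin k → Matrix (Fin n) (Fin n) ℝ) : Prop :=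
  ∀ J' : Set (Fin k), Nspace A J' ⊓ Rspace A J' = ⊥

/-- Σ is ℝⁿ-transversal: `N_{J'} + R_{J'} = ℝⁿ` for every `J' ⊆ J`. -/
def IsRnTransversal {n k : ℕ} (A : Fin k → Matrix (Fin n) (Fin n) ℝ) : Prop :=
  ∀ J' : Set (Fin k), Nspace A J' ⊔ Rspace A J' = ⊤

/-- Σ is transversal: `N_{J'} ⊕ R_{J'} = ℝⁿ` for every `J' ⊆ J`. -/
def IsTransversal {n k : ℕ} (A : Fin k → Matrix (Fin n) (Fin n) ℝ) : Prop :=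
  IsZeroTransversal A ∧ IsRnTransversal A

/- Run through `J'` along a sequence `j` that visits every index of `J'` infinitely
often, and let `L` be the limit of the left products. Since `L_{m+1} = A_{j_m} L_m`, every `A_i`
with `i ∈ J'` fixes `L`, so `L x ∈ N_{J'}`; and each `x - L_m x` telescopes into a sum of vectors
`(I - A_{j_i}) L_i x ∈ R_{J'}`, so the limit `x - L x` lies in the closed subspace `R_{J'}`. -/

theorem Set.Nonempty.exists_seq_mem_frequently_eq {ι : Type*} [Countable ι] {S : Set ι}
    (hS : S.Nonempty) :
    ∃ j : ℕ → ι, (∀ m, j m ∈ S) ∧ ∀ i ∈ S, ∃ᶠ m in atTop, j m = i := by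
  obtain ⟨f, rfl⟩ := S.to_countable.exists_eq_range hS
  refine ⟨fun m => f m.unpair.1, fun m => ⟨_, rfl⟩, ?_⟩
  rintro _ ⟨a, rfl⟩
  exact frequently_atTop.2 fun N => ⟨Nat.pair a N, Nat.right_le_pair a N, by simp⟩

theorem mul_eq_self_of_tendsto_of_frequently {M : Type*} [Mul M] [TopologicalSpace M]
    [T2Space M] [ContinuousMul M] {P B : ℕ → M} {L c : M}
    (hP : ∀ m, P (m + 1) = B m * P m) (hL : Tendsto P atTop (𝓝 L))
    (hc : ∃ᶠ m in atTop, B m = c) : c * L = L := by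
  obtain ⟨φ, hφ, hBφ⟩ := extraction_of_frequently_atTop hc
  have hPφ : Tendsto (P ∘ φ) atTop (𝓝 L) := hL.comp hφ.tendsto_atTop
  have hPφ_succ : Tendsto (fun t => c * P (φ t)) atTop (𝓝 L) := by
    refine (hL.comp ((tendsto_add_atTop_nat 1).comp hφ.tendsto_atTop)).congr fun t => ?_
    simp [hP, hBφ t]
  exact tendsto_nhds_unique (tendsto_const_nhds.mul hPφ) hPφ_succ

section

variable {n k : ℕ} (A : Fin k → Matrix (Fin n) (Fin n) ℝ)

theorem Nspace_empty : Nspace A ∅ = ⊤ := by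
  simp [Nspace]

theorem mulVec_mem_Nspace {J' : Set (Fin k)} {L : Matrix (Fin n) (Fin n) ℝ}
    (hL : ∀ i ∈ J', A i * L = L) (x : Fin n → ℝ) : L *ᵥ x ∈ Nspace A J' := by
  simp only [Nspace, Submodule.mem_iInf, LinearMap.mem_ker, Matrix.mulVecLin_apply,
    Matrix.mulVec_mulVec, sub_mul, one_mul]
  intro i hi
  rw [hL i hi, sub_self, Matrix.zero_mulVec]

theorem range_le_Rspace {J' : Set (Fin k)} {i : Fin k} (hi : i ∈ J') :
    LinearMap.range (Matrix.mulVecLin (1 - A i)) ≤ Rspace A J' :=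
  le_iSup₂ (f := fun i (_ : i ∈ J') => LinearMap.range (Matrix.mulVecLin (1 - A i))) i hi

theorem sub_leftProd_mulVec_mem_Rspace {J' : Set (Fin k)} {j : ℕ → Fin k}
    (hj : ∀ m, j m ∈ J') (x : Fin n → ℝ) (m : ℕ) :
    x - leftProd A j m *ᵥ x ∈ Rspace A J' := by
  induction m with
  | zero => simp [leftProd]
  | succ m ih =>
    have htelescope : x - leftProd A j (m + 1) *ᵥ x
        = (x - leftProd A j m *ᵥ x) + (1 - A (j m)) *ᵥ (leftProd A j m *ᵥ x) := by
      rw [leftProd, Matrix.sub_mulVec, Matrix.one_mulVec, ← Matrix.mulVec_mulVec]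
      abel
    rw [htelescope]
    exact (Rspace A J').add_mem ih (range_le_Rspace A (hj m) ⟨_, rfl⟩)

theorem sub_mulVec_mem_Rspace_of_tendsto {J' : Set (Fin k)} {j : ℕ → Fin k}
    (hj : ∀ m, j m ∈ J') {L : Matrix (Fin n) (Fin n) ℝ}
    (hL : Tendsto (leftProd A j) atTop (𝓝 L)) (x : Fin n → ℝ) :
    x - L *ᵥ x ∈ Rspace A J' := by
  have hlim : Tendsto (fun m => x - leftProd A j m *ᵥ x) atTop (𝓝 (x - L *ᵥ x)) :=
    tendsto_const_nhds.sub (((continuous_id.matrix_mulVec continuous_const).tendsto L).comp hL)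
  exact (Rspace A J').closed_of_finiteDimensional.mem_of_tendsto hlim
    (.of_forall (sub_leftProd_mulVec_mem_Rspace A hj x))

theorem Nspace_sup_Rspace_eq_top_of_tendsto {J' : Set (Fin k)} {j : ℕ → Fin k}
    (hj : ∀ m, j m ∈ J') (hvisit : ∀ i ∈ J', ∃ᶠ m in atTop, j m = i)
    {L : Matrix (Fin n) (Fin n) ℝ} (hL : Tendsto (leftProd A j) atTop (𝓝 L)) :
    Nspace A J' ⊔ Rspace A J' = ⊤ := by
  have hfix : ∀ i ∈ J', A i * L = L := fun i hi =>
    mul_eq_self_of_tendsto_of_frequently (fun m => rfl) hL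
      ((hvisit i hi).mono fun m hm => congrArg A hm)
  refine eq_top_iff.2 fun x _ => ?_
  rw [← add_sub_cancel (L *ᵥ x) x]
  exact Submodule.add_mem_sup (mulVec_mem_Nspace A hfix x)
    (sub_mulVec_mem_Rspace_of_tendsto A hj hL x)

end

/-- If Σ is LCP then Σ is ℝⁿ-transversal. -/
theorem lcp_imp_rn_transversal {n k : ℕ} (A : Fin k → Matrix (Fin n) (Fin n) ℝ)
    (hLCP : IsLCP A) : IsRnTransversal A := by
  intro J'
  rcases J'.eq_empty_or_nonempty with rfl | hJ'
  · rw [Nspace_empty, top_sup_eq]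
  · obtain ⟨j, hj, hvisit⟩ := hJ'.exists_seq_mem_frequently_eq
    obtain ⟨L, hL⟩ := hLCP j
    exact Nspace_sup_Rspace_eq_top_of_tendsto A hj hvisit hL
end

section
/- Let Σ = {A_j : j ∈ J} be a finite set of real n×n matrices. If Σ is RCP then Σ is 0-transversal, i.e., N_{J'} ∩ R_{J'} = {0} for every subset J' ⊆ J. -/
open Filter Topology Matrix

attribute [local instance] Matrix.normedAddCommGroup

/-!
Choose a sequence of indices in `J'` that takes every value of `J'` infinitely often, and let `L`
be the limit of its right products. Since `R_{m+1} = R_m A_{j_m}`, passing to the limit along the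
times where `j_m = c` gives `L A_c = L`, so `L` kills every `range (I - A_c)`, hence `R_{J'}`. On the
other hand every `R_m` fixes `N_{J'}` pointwise, hence so does `L`. A vector of `N_{J'} ∩ R_{J'}` is
therefore both fixed and killed by `L`.
-/

theorem Set.Countable.exists_seq_frequently_eq {α : Type*} {s : Set α} (hc : s.Countable)
    (hs : s.Nonempty) :
    ∃ j : ℕ → α, (∀ m, j m ∈ s) ∧ ∀ c ∈ s, ∃ᶠ m in atTop, j m = c := by
  obtain ⟨f, rfl⟩ := hc.exists_eq_range hs
  refine ⟨fun m => f m.unpair.1, fun m => Set.mem_range_self _, ?_⟩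
  rintro _ ⟨i, rfl⟩
  exact frequently_atTop.2 fun a => ⟨Nat.pair i a, Nat.right_le_pair i a, by simp⟩

section RightProducts

variable {n k : ℕ} {A : Fin k → Matrix (Fin n) (Fin n) ℝ} {j : ℕ → Fin k}
  {L : Matrix (Fin n) (Fin n) ℝ}

theorem mul_eq_of_tendsto_rightProd (hL : Tendsto (rightProd A j) atTop (𝓝 L)) {c : Fin k}
    (hc : ∃ᶠ m in atTop, j m = c) : L * A c = L := by
  have hsucc : Tendsto (fun m => rightProd A j (m + 1)) atTop (𝓝 L) :=
    hL.comp (tendsto_add_atTop_nat 1)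
  refine tendsto_nhds_unique_of_frequently_eq (hL.mul_const (A c)) hsucc ?_
  exact hc.mono fun m hm => by rw [rightProd, hm]

theorem rightProd_mulVec_of_mem_Nspace {J' : Set (Fin k)} (hj : ∀ m, j m ∈ J')
    {x : Fin n → ℝ} (hx : x ∈ Nspace A J') (m : ℕ) : rightProd A j m *ᵥ x = x := by
  have hfix : ∀ c ∈ J', A c *ᵥ x = x := fun c hc => by
    have hker : (1 - A c) *ᵥ x = 0 := (Submodule.mem_iInf _).1 ((Submodule.mem_iInf _).1 hx c) hc
    rwa [Matrix.sub_mulVec, Matrix.one_mulVec, sub_eq_zero, eq_comm] at hker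
  induction m with
  | zero => simp [rightProd]
  | succ m ih => rw [rightProd, ← Matrix.mulVec_mulVec, hfix _ (hj m), ih]

theorem mulVec_eq_of_tendsto_rightProd (hL : Tendsto (rightProd A j) atTop (𝓝 L))
    {J' : Set (Fin k)} (hj : ∀ m, j m ∈ J') {x : Fin n → ℝ} (hx : x ∈ Nspace A J') :
    L *ᵥ x = x := by
  have hcont : Continuous fun M : Matrix (Fin n) (Fin n) ℝ => M *ᵥ x :=
    continuous_id.matrix_mulVec continuous_const
  refine tendsto_nhds_unique (hcont.tendsto L |>.comp hL) ?_
  simp only [Function.comp_def, rightProd_mulVec_of_mem_Nspace hj hx]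
  exact tendsto_const_nhds

end RightProducts

theorem Rspace_le_ker_of_mul_eq {n k : ℕ} {A : Fin k → Matrix (Fin n) (Fin n) ℝ}
    {J' : Set (Fin k)} {L : Matrix (Fin n) (Fin n) ℝ} (hL : ∀ c ∈ J', L * A c = L) :
    Rspace A J' ≤ LinearMap.ker L.mulVecLin := by
  refine iSup₂_le fun c hc => ?_
  rintro _ ⟨y, rfl⟩
  change L *ᵥ ((1 - A c) *ᵥ y) = 0
  rw [Matrix.mulVec_mulVec, Matrix.mul_sub, Matrix.mul_one, hL c hc, sub_self,
    Matrix.zero_mulVec]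

/-- If Σ is RCP then Σ is 0-transversal. -/
theorem rcp_imp_zero_transversal {n k : ℕ} (A : Fin k → Matrix (Fin n) (Fin n) ℝ)
    (hRCP : IsRCP A) : IsZeroTransversal A := by
  intro J'
  rcases J'.eq_empty_or_nonempty with rfl | hne
  · simp [Rspace]
  obtain ⟨j, hjJ', hfreq⟩ := J'.to_countable.exists_seq_frequently_eq hne
  obtain ⟨L, hL⟩ := hRCP j
  have hker := Rspace_le_ker_of_mul_eq fun c hc => mul_eq_of_tendsto_rightProd hL (hfreq c hc)
  refine eq_bot_iff.2 fun x hx => ?_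
  obtain ⟨hxN, hxR⟩ := Submodule.mem_inf.1 hx
  have hLx : L *ᵥ x = 0 := hker hxR
  rw [Submodule.mem_bot, ← mulVec_eq_of_tendsto_rightProd hL hjJ' hxN, hLx]
end

section
/- Let Σ = {A_j : j ∈ J} be a finite set of real n×n matrices. If Σ is LCP and 0-transversal, then Σ is RCP. -/
/-!
Left convergence of the products forces the semigroup generated by the matrices to be bounded:
otherwise a vector with unbounded orbit could be driven to infinity along a single sequence.

Fix a set `S` of letters. If a sequence uses only letters of `S`, each infinitely often, the
limit `L` of its left products satisfies `A_a L = L` for `a ∈ S`, so `L` maps into `N_S`, while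
`L - 1` maps into the closed subspace `R_S`; by 0-transversality `L` vanishes on `R_S`. Compactness
of the closure of the products of complete words (words using exactly the letters of `S`) makes
this uniform: products of sufficiently many complete words are uniformly small on `R_S`.

For an arbitrary sequence let `S` be the set of letters occurring infinitely often. After a finite
prefix, the right products `R_m` fix the range of `L` and their left part consists of more and more
complete words, so `R_m (1 - L) → 0`, that is `R_m → L`.
-/

open Filter Topology Matrix

attribute [local instance] Matrix.normedAddCommGroup

section SeqLeftProd

variable {M : Type*} [Monoid M]

def seqLeftProd (f : ℕ → M) : ℕ → M
  | 0 => 1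
  | m + 1 => f m * seqLeftProd f m

@[simp] theorem seqLeftProd_zero (f : ℕ → M) : seqLeftProd f 0 = 1 := rfl

@[simp] theorem seqLeftProd_succ (f : ℕ → M) (m : ℕ) :
    seqLeftProd f (m + 1) = f m * seqLeftProd f m := rfl

theorem seqLeftProd_succ' (f : ℕ → M) (m : ℕ) :
    seqLeftProd f (m + 1) = seqLeftProd (fun t => f (t + 1)) m * f 0 := by
  induction m with
  | zero => simp
  | succ m ih => rw [seqLeftProd_succ, ih, seqLeftProd_succ, mul_assoc]

theorem seqLeftProd_mem {K : Submonoid M} {f : ℕ → M} (hf : ∀ t, f t ∈ K) (m : ℕ) :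
    seqLeftProd f m ∈ K := by
  induction m with
  | zero => exact K.one_mem
  | succ m ih => exact K.mul_mem (hf m) ih

theorem exists_mem_seqLeftProd_eq_mul {K : Submonoid M} {f : ℕ → M} (hf : ∀ t, f t ∈ K)
    {i m : ℕ} (him : i ≤ m) : ∃ Q ∈ K, seqLeftProd f m = Q * seqLeftProd f i := by
  induction m, him using Nat.le_induction with
  | base => exact ⟨1, K.one_mem, (one_mul _).symm⟩
  | succ m _ ih =>
    obtain ⟨Q, hQ, hm⟩ := ih
    exact ⟨f m * Q, K.mul_mem (hf m) hQ, by rw [seqLeftProd_succ, hm, mul_assoc]⟩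

theorem continuous_seqLeftProd [TopologicalSpace M] [ContinuousMul M] (m : ℕ) :
    Continuous fun f : ℕ → M => seqLeftProd f m := by
  induction m with
  | zero => exact continuous_const
  | succ m ih => exact (continuous_apply m).mul ih

/-- Telescoping: the left factor `Z` absorbs the factors already passed, so each replaced factor
costs at most `B ^ 2` times its error. -/
theorem norm_mul_sub_seqLeftProd_le {R : Type*} [NormedRing R] {K : Submonoid R} {B : ℝ}
    (hB : ∀ Z ∈ K, ‖Z‖ ≤ B) {f g : ℕ → R} (hf : ∀ t, f t ∈ K) (hg : ∀ t, g t ∈ K) (i : ℕ) :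
    ∀ Z ∈ K, ‖Z * (seqLeftProd f i - seqLeftProd g i)‖ ≤
      B ^ 2 * ∑ t ∈ Finset.range i, ‖f t - g t‖ := by
  induction i with
  | zero => intro Z _; simp
  | succ i ih =>
    intro Z hZ
    have hsplit : Z * (seqLeftProd f (i + 1) - seqLeftProd g (i + 1)) =
        Z * f i * (seqLeftProd f i - seqLeftProd g i) +
          Z * (f i - g i) * seqLeftProd g i := by
      simp only [seqLeftProd_succ]; noncomm_ring
    have hB0 : 0 ≤ B := (norm_nonneg Z).trans (hB Z hZ)
    have hlast : ‖Z * (f i - g i) * seqLeftProd g i‖ ≤ B ^ 2 * ‖f i - g i‖ :=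
      calc ‖Z * (f i - g i) * seqLeftProd g i‖
          ≤ ‖Z‖ * ‖f i - g i‖ * ‖seqLeftProd g i‖ := norm_mul₃_le
        _ ≤ B * ‖f i - g i‖ * B := by
          gcongr
          · exact hB Z hZ
          · exact hB _ (seqLeftProd_mem hg i)
        _ = B ^ 2 * ‖f i - g i‖ := by ring
    rw [hsplit, Finset.sum_range_succ, mul_add]
    exact (norm_add_le _ _).trans (add_le_add (ih _ (K.mul_mem hZ (hf i))) hlast)

end SeqLeftProd

section Concatenation

variable {α : Type*}

theorem exists_forall_map_range_eq_flatten (g : ℕ → List α) (hg : ∀ t, g t ≠ []) :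
    ∃ (d : ℕ → α) (s : ℕ → ℕ), StrictMono s ∧
      ∀ i, (List.range (s i)).map d = ((List.range i).map g).flatten := by
  set F : ℕ → List α := fun i => ((List.range i).map g).flatten with hF
  have hF_add (i p : ℕ) : ∃ l, F (i + p) = F i ++ l :=
    ⟨((List.range p).map fun q => g (i + q)).flatten, by
      simp [hF, List.range_add, Function.comp_def]⟩
  have hF_succ (i : ℕ) : F (i + 1) = F i ++ g i := by simp [hF, List.range_succ]
  have hF_len (i : ℕ) : i ≤ (F i).length := by
    induction i with
    | zero => simp
    | succ i ih =>
      rw [hF_succ, List.length_append]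
      have := List.length_pos_iff.mpr (hg i)
      omega
  have hF_prefix {i i' : ℕ} (h : i ≤ i') : F i <+: F i' := by
    obtain ⟨p, rfl⟩ := Nat.exists_eq_add_of_le h
    obtain ⟨l, hl⟩ := hF_add i p
    exact hl ▸ List.prefix_append _ _
  have hlt (p : ℕ) : p < (F (p + 1)).length := (hF_len (p + 1)).trans_lt' p.lt_succ_self
  refine ⟨fun p => (F (p + 1))[p]'(hlt p), fun i => (F i).length, ?_, fun i => ?_⟩
  · refine strictMono_nat_of_lt_succ fun i => ?_
    rw [hF_succ, List.length_append]
    have := List.length_pos_iff.mpr (hg i)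
    omega
  · refine List.ext_getElem (by rw [List.length_map, List.length_range]) fun p _ hp => ?_
    simp only [List.getElem_map, List.getElem_range]
    rcases le_total (p + 1) i with h | h
    · exact (hF_prefix h).getElem _
    · exact ((hF_prefix h).getElem hp).symm

end Concatenation

section Operators

variable {ι E : Type*} [NormedAddCommGroup E] [NormedSpace ℝ E] (T : ι → E →L[ℝ] E)

/-- The first letter of the word is the leftmost factor, hence applied last. -/
noncomputable def wordProd (w : List ι) : E →L[ℝ] E := (w.map T).prod

@[simp] theorem wordProd_nil : wordProd T [] = 1 := rfl

@[simp] theorem wordProd_cons (a : ι) (w : List ι) :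
    wordProd T (a :: w) = T a * wordProd T w := List.prod_cons

@[simp] theorem wordProd_append (v w : List ι) :
    wordProd T (v ++ w) = wordProd T v * wordProd T w := by
  simp [wordProd]

theorem seqLeftProd_comp_eq_wordProd (d : ℕ → ι) (m : ℕ) :
    seqLeftProd (T ∘ d) m = wordProd T ((List.range m).map d).reverse := by
  induction m with
  | zero => rfl
  | succ m ih => simp [List.range_succ, ih]

theorem wordProd_reverse_flatten (b : ℕ → List ι) (i : ℕ) :
    wordProd T ((List.range i).map fun t => (b t).reverse).flatten.reverse =
      seqLeftProd (wordProd T ∘ b) i := by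
  induction i with
  | zero => rfl
  | succ i ih => simp [List.range_succ, ih]

/-- `d` is the concatenation of the reversed words `b t`, and `s i` the end of the `i`-th one. -/
theorem exists_seq_seqLeftProd_eq (b : ℕ → List ι) (hb : ∀ t, b t ≠ []) :
    ∃ (d : ℕ → ι) (s : ℕ → ℕ), StrictMono s ∧ (∀ m, ∃ t, d m ∈ b t) ∧
      (∀ a, (∀ t, a ∈ b t) → ∃ᶠ m in atTop, d m = a) ∧
      ∀ i, seqLeftProd (T ∘ d) (s i) = seqLeftProd (wordProd T ∘ b) i := by
  obtain ⟨d, s, hs, hds⟩ :=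
    exists_forall_map_range_eq_flatten (fun t => (b t).reverse) (by simpa using hb)
  refine ⟨d, s, hs, fun m => ?_, fun a ha => frequently_atTop.2 fun N => ?_, fun i => ?_⟩
  · have hm : d m ∈ (List.range (s (m + 1))).map d :=
      List.mem_map_of_mem (List.mem_range.2 ((hs.id_le (m + 1)).trans_lt' m.lt_succ_self))
    rw [hds] at hm
    obtain ⟨t, -, ht⟩ := by simpa using hm
    exact ⟨t, ht⟩
  · obtain ⟨q, hq, hqa⟩ := List.getElem_of_mem (List.mem_reverse.2 (ha N))
    have hlen : ((List.range N).map fun t => (b t).reverse).flatten.length = s N := by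
      simpa using congrArg List.length (hds N).symm
    have h := congrArg (·[s N + q]?) (hds (N + 1))
    simp only [List.range_succ, List.map_append, List.map_singleton, List.flatten_append,
      List.flatten_singleton] at h
    rw [List.getElem?_append_right (by omega), hlen, Nat.add_sub_cancel_left,
      List.getElem?_eq_getElem hq, hqa, List.getElem?_map] at h
    have hlt : s N + q < s (N + 1) := by
      by_contra hge
      rw [List.getElem?_eq_none (by simp; omega)] at h
      simp at h
    rw [List.getElem?_range hlt] at h
    exact ⟨s N + q, (hs.id_le N).trans (Nat.le_add_right _ _), by simpa using h⟩
  · rw [seqLeftProd_comp_eq_wordProd, hds, wordProd_reverse_flatten]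

/-- The analogue of `Nspace` for a family of operators. -/
noncomputable def fixedSpace (S : Set ι) : Submodule ℝ E :=
  ⨅ a ∈ S, LinearMap.ker ((1 - T a : E →L[ℝ] E) : E →ₗ[ℝ] E)

/-- The analogue of `Rspace` for a family of operators. -/
noncomputable def displacementSpace (S : Set ι) : Submodule ℝ E :=
  ⨆ a ∈ S, LinearMap.range ((1 - T a : E →L[ℝ] E) : E →ₗ[ℝ] E)

/-- The analogue of `IsLCP` for a family of operators. -/
def LeftProductsConverge : Prop :=
  ∀ d : ℕ → ι, ∃ L, Tendsto (seqLeftProd (T ∘ d)) atTop (𝓝 L)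

noncomputable def productClosure : Submonoid (E →L[ℝ] E) :=
  (Submonoid.closure (Set.range T)).topologicalClosure

variable {T} {S : Set ι}

theorem mem_fixedSpace {x : E} : x ∈ fixedSpace T S ↔ ∀ a ∈ S, T a x = x := by
  simp only [fixedSpace, Submodule.mem_iInf, LinearMap.mem_ker, ContinuousLinearMap.coe_coe,
    _root_.sub_apply, one_apply_eq_self, sub_eq_zero]
  exact forall₂_congr fun _ _ => eq_comm

theorem sub_apply_mem_displacementSpace {a : ι} (ha : a ∈ S) (x : E) :
    x - T a x ∈ displacementSpace T S :=
  (le_iSup₂ (f := fun a (_ : a ∈ S) => LinearMap.range ((1 - T a : E →L[ℝ] E) : E →ₗ[ℝ] E))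
    a ha) ⟨x, rfl⟩

theorem wordProd_apply_of_mem_fixedSpace {w : List ι} (hw : ∀ a ∈ w, a ∈ S) {x : E}
    (hx : x ∈ fixedSpace T S) : wordProd T w x = x := by
  induction w with
  | nil => rfl
  | cons a w ih =>
    simp only [List.forall_mem_cons] at hw
    simp [ih hw.2, mem_fixedSpace.1 hx a hw.1]

theorem wordProd_apply_sub_mem_displacementSpace {w : List ι} (hw : ∀ a ∈ w, a ∈ S) (x : E) :
    wordProd T w x - x ∈ displacementSpace T S := by
  induction w with
  | nil => simp
  | cons a w ih =>
    simp only [List.forall_mem_cons] at hw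
    have h := sub_apply_mem_displacementSpace (T := T) hw.1 (wordProd T w x)
    have : T a (wordProd T w x) - x =
        (wordProd T w x - x) - (wordProd T w x - T a (wordProd T w x)) := by abel
    rw [wordProd_cons, mul_apply_eq_comp, this]
    exact Submodule.sub_mem _ (ih hw.2) h

theorem wordProd_apply_mem_displacementSpace {w : List ι} (hw : ∀ a ∈ w, a ∈ S) {x : E}
    (hx : x ∈ displacementSpace T S) : wordProd T w x ∈ displacementSpace T S := by
  simpa using Submodule.add_mem _ (wordProd_apply_sub_mem_displacementSpace hw x) hx

theorem wordProd_mem_productClosure (w : List ι) : wordProd T w ∈ productClosure T :=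
  Submonoid.le_topologicalClosure _ <| Submonoid.list_prod_mem _ fun Z hZ => by
    obtain ⟨a, -, rfl⟩ := List.mem_map.1 hZ
    exact Submonoid.subset_closure ⟨a, rfl⟩

theorem isClosed_productClosure : IsClosed (productClosure T : Set (E →L[ℝ] E)) :=
  (Submonoid.closure (Set.range T)).isClosed_topologicalClosure

theorem norm_le_of_mem_productClosure {B : ℝ} (hB : ∀ w, ‖wordProd T w‖ ≤ B) :
    ∀ Z ∈ productClosure T, ‖Z‖ ≤ B := by
  refine fun Z hZ => closure_minimal (fun Y hY => ?_)
    (isClosed_le continuous_norm continuous_const) hZ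
  obtain ⟨w, rfl⟩ : ∃ w, wordProd T w = Y := by
    induction hY using Submonoid.closure_induction with
    | mem _ h =>
      obtain ⟨a, rfl⟩ := h
      exact ⟨[a], by simp⟩
    | one => exact ⟨[], rfl⟩
    | mul _ _ _ _ h₁ h₂ =>
      obtain ⟨v, rfl⟩ := h₁
      obtain ⟨w, rfl⟩ := h₂
      exact ⟨v ++ w, wordProd_append T v w⟩
  exact hB w

end Operators

section Limits

variable {ι E : Type*} [NormedAddCommGroup E] [NormedSpace ℝ E]
  {T : ι → E →L[ℝ] E} {S : Set ι} {d : ℕ → ι} {L : E →L[ℝ] E}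

theorem apply_mul_eq_of_tendsto (hL : Tendsto (seqLeftProd (T ∘ d)) atTop (𝓝 L)) {a : ι}
    (ha : ∃ᶠ m in atTop, d m = a) : T a * L = L :=
  tendsto_nhds_unique_of_frequently_eq (hL.const_mul (T a)) ((tendsto_add_atTop_iff_nat 1).2 hL)
    (ha.mono fun m hm => by simp [hm])

theorem apply_mem_fixedSpace_of_tendsto (hrec : ∀ a ∈ S, ∃ᶠ m in atTop, d m = a)
    (hL : Tendsto (seqLeftProd (T ∘ d)) atTop (𝓝 L)) (x : E) : L x ∈ fixedSpace T S :=
  mem_fixedSpace.2 fun a ha => by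
    rw [← mul_apply_eq_comp, apply_mul_eq_of_tendsto hL (hrec a ha)]

variable [FiniteDimensional ℝ E]

theorem apply_sub_mem_displacementSpace_of_tendsto (hdS : ∀ m, d m ∈ S)
    (hL : Tendsto (seqLeftProd (T ∘ d)) atTop (𝓝 L)) (x : E) :
    L x - x ∈ displacementSpace T S := by
  refine (displacementSpace T S).closed_of_finiteDimensional.mem_of_tendsto
    ((((ContinuousLinearMap.apply ℝ E x).continuous.tendsto L).comp hL).sub_const x)
    (Eventually.of_forall fun m => ?_)
  simpa [seqLeftProd_comp_eq_wordProd] using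
    wordProd_apply_sub_mem_displacementSpace (by simpa using fun i _ => hdS i) x

theorem apply_eq_zero_of_tendsto (h0 : fixedSpace T S ⊓ displacementSpace T S = ⊥)
    (hdS : ∀ m, d m ∈ S) (hrec : ∀ a ∈ S, ∃ᶠ m in atTop, d m = a)
    (hL : Tendsto (seqLeftProd (T ∘ d)) atTop (𝓝 L)) {y : E} (hy : y ∈ displacementSpace T S) :
    L y = 0 := by
  have hR : L y ∈ displacementSpace T S := by
    simpa using Submodule.add_mem _ (apply_sub_mem_displacementSpace_of_tendsto hdS hL y) hy
  exact (Submodule.eq_bot_iff _).1 h0 _ ⟨apply_mem_fixedSpace_of_tendsto hrec hL y, hR⟩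

end Limits

section Boundedness

variable {ι E : Type*} [NormedAddCommGroup E] [NormedSpace ℝ E] (T : ι → E →L[ℝ] E)

def boundedOrbits : Submodule ℝ E where
  carrier := {v | ∃ C, ∀ w, ‖wordProd T w v‖ ≤ C}
  add_mem' := by
    rintro x y ⟨C₁, h₁⟩ ⟨C₂, h₂⟩
    exact ⟨C₁ + C₂, fun w => by simpa using (norm_add_le _ _).trans (add_le_add (h₁ w) (h₂ w))⟩
  zero_mem' := ⟨0, by simp⟩
  smul_mem' := by
    rintro c x ⟨C, h⟩
    exact ⟨‖c‖ * C, fun w => by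
      simpa [norm_smul] using mul_le_mul_of_nonneg_left (h w) (norm_nonneg c)⟩

variable {T}

/-- Stop a word that makes `‖v‖` huge at the first point where the norm reaches `r`: there the
norm is at most `α * r`, so an orbit bounded from there on could not become huge. -/
theorem exists_wordProd_apply_notMem_boundedOrbits {K α : ℝ} (hK0 : 0 ≤ K)
    (hK : ∀ u ∈ boundedOrbits T, ∀ w, ‖wordProd T w u‖ ≤ K * ‖u‖) (hα : ∀ a, ‖T a‖ ≤ α)
    {v : E} (hv : v ∉ boundedOrbits T) {r : ℝ} (hr : ‖v‖ < r) :
    ∃ w, wordProd T w v ∉ boundedOrbits T ∧ r ≤ ‖wordProd T w v‖ := by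
  classical
  obtain ⟨w₀, hw₀⟩ : ∃ w₀, max r (K * (α * r)) < ‖wordProd T w₀ v‖ := by
    by_contra! h
    exact hv ⟨_, h⟩
  have hex : ∃ i, ‖wordProd T (w₀.drop i) v‖ < r := ⟨w₀.length, by simpa using hr⟩
  have hpos : Nat.find hex ≠ 0 := fun h => by
    have := Nat.find_spec hex
    rw [h, List.drop_zero] at this
    linarith [le_max_left r (K * (α * r))]
  set i := Nat.find hex - 1
  have hi : r ≤ ‖wordProd T (w₀.drop i) v‖ := not_lt.1 (Nat.find_min hex (by omega))
  have hi' : ‖wordProd T (w₀.drop (i + 1)) v‖ < r := by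
    simpa [show i + 1 = Nat.find hex by omega] using Nat.find_spec hex
  have hlen : i < w₀.length := by
    by_contra! h
    rw [List.drop_eq_nil_of_le h] at hi
    exact hr.not_ge (by simpa using hi)
  have hstep : ‖wordProd T (w₀.drop i) v‖ ≤ α * r := by
    rw [List.drop_eq_getElem_cons hlen, wordProd_cons, mul_apply_eq_comp]
    calc _ ≤ ‖T w₀[i]‖ * ‖wordProd T (w₀.drop (i + 1)) v‖ := ContinuousLinearMap.le_opNorm _ _
      _ ≤ α * r := mul_le_mul (hα _) hi'.le (norm_nonneg _) ((norm_nonneg _).trans (hα w₀[i]))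
  refine ⟨w₀.drop i, fun hmem => ?_, hi⟩
  have := hK _ hmem (w₀.take i)
  rw [← mul_apply_eq_comp, ← wordProd_append, List.take_append_drop] at this
  nlinarith [le_max_right r (K * (α * r))]

variable [FiniteDimensional ℝ E]

theorem exists_norm_wordProd_apply_le (V : Submodule ℝ E)
    (hV : ∀ v ∈ V, ∃ C, ∀ w, ‖wordProd T w v‖ ≤ C) :
    ∃ K, 0 ≤ K ∧ ∀ v ∈ V, ∀ w, ‖wordProd T w v‖ ≤ K * ‖v‖ := by
  obtain ⟨K, hK⟩ := banach_steinhaus (g := fun w => (wordProd T w).comp V.subtypeL)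
    fun v => hV v v.2
  refine ⟨K, (norm_nonneg _).trans (hK []), fun v hv w => ?_⟩
  simpa using ((wordProd T w).comp V.subtypeL).le_of_opNorm_le (hK w) ⟨v, hv⟩

theorem exists_forall_le_norm_seqLeftProd_apply [Finite ι] {v₀ : E}
    (hv₀ : v₀ ∉ boundedOrbits T) :
    ∃ b : ℕ → List ι, (∀ t, b t ≠ []) ∧ ∀ i : ℕ, (i : ℝ) ≤ ‖seqLeftProd (wordProd T ∘ b) i v₀‖ := by
  obtain ⟨K, hK0, hK⟩ := exists_norm_wordProd_apply_le (boundedOrbits T) fun v hv => hv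
  obtain ⟨α, hα⟩ := Finite.exists_le fun a => ‖T a‖
  choose w hw using fun v : {v // v ∉ boundedOrbits T} =>
    exists_wordProd_apply_notMem_boundedOrbits hK0 hK hα v.2 (lt_add_one ‖(v : E)‖)
  let next (v : {v // v ∉ boundedOrbits T}) : {v // v ∉ boundedOrbits T} := ⟨_, (hw v).1⟩
  let orbit (i : ℕ) := next^[i] ⟨v₀, hv₀⟩
  have hsucc (i : ℕ) : orbit (i + 1) = next (orbit i) := Function.iterate_succ_apply' _ _ _
  have horbit (i : ℕ) : seqLeftProd (wordProd T ∘ fun t => w (orbit t)) i v₀ = orbit i := by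
    induction i with
    | zero => rfl
    | succ i ih =>
      rw [seqLeftProd_succ, mul_apply_eq_comp, ih, hsucc]
      rfl
  refine ⟨fun t => w (orbit t), fun i h => ?_, fun i => ?_⟩
  · have := (hw (orbit i)).2
    rw [show w (orbit i) = [] from h, wordProd_nil, one_apply_eq_self] at this
    linarith
  · rw [horbit]
    induction i with
    | zero => simp
    | succ i ih =>
      rw [hsucc]
      push_cast
      linarith [(hw (orbit i)).2]

theorem boundedOrbits_eq_top [Finite ι] (hT : LeftProductsConverge T) :
    boundedOrbits T = ⊤ := by
  by_contra hne
  obtain ⟨v₀, hv₀⟩ : ∃ v, v ∉ boundedOrbits T := by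
    contrapose! hne
    exact Submodule.eq_top_iff'.2 hne
  obtain ⟨b, hb, hgrow⟩ := exists_forall_le_norm_seqLeftProd_apply hv₀
  obtain ⟨d, s, -, -, -, hds⟩ := exists_seq_seqLeftProd_eq T b hb
  obtain ⟨L, hL⟩ := hT d
  obtain ⟨C, hC⟩ := hL.norm.bddAbove_range
  obtain ⟨i, hi⟩ := exists_nat_gt (C * ‖v₀‖)
  have : ‖seqLeftProd (wordProd T ∘ b) i v₀‖ ≤ C * ‖v₀‖ := by
    rw [← hds]
    exact (ContinuousLinearMap.le_opNorm _ _).trans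
      (mul_le_mul_of_nonneg_right (hC (Set.mem_range_self _)) (norm_nonneg _))
  linarith [hgrow i]

theorem exists_norm_le_of_mem_productClosure [Finite ι] (hT : LeftProductsConverge T) :
    ∃ B, ∀ Z ∈ productClosure T, ‖Z‖ ≤ B := by
  obtain ⟨K, hK0, hK⟩ := exists_norm_wordProd_apply_le (T := T) ⊤ fun v _ =>
    show v ∈ boundedOrbits T from boundedOrbits_eq_top hT ▸ Submodule.mem_top
  exact ⟨K, norm_le_of_mem_productClosure fun w =>
    ContinuousLinearMap.opNorm_le_bound _ hK0 fun v => hK v trivial w⟩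

end Boundedness

section OpNormOn

variable {E : Type*} [NormedAddCommGroup E] [NormedSpace ℝ E] (V : Submodule ℝ E)

noncomputable def opNormOn (X : E →L[ℝ] E) : ℝ := ‖X.comp V.subtypeL‖

theorem opNormOn_nonneg (X : E →L[ℝ] E) : 0 ≤ opNormOn V X := norm_nonneg (E := V →L[ℝ] E) _

theorem continuous_opNormOn : Continuous (opNormOn V) :=
  (continuous_norm (E := V →L[ℝ] E)).comp (continuous_id.clm_comp continuous_const)

theorem norm_apply_le_opNormOn (X : E →L[ℝ] E) {y : E} (hy : y ∈ V) :
    ‖X y‖ ≤ opNormOn V X * ‖y‖ :=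
  (X.comp V.subtypeL).le_opNorm ⟨y, hy⟩

theorem opNormOn_eq_zero {X : E →L[ℝ] E} (hX : ∀ y ∈ V, X y = 0) : opNormOn V X = 0 :=
  (norm_eq_zero (E := V →L[ℝ] E)).2 (ContinuousLinearMap.ext fun y => hX y y.2)

theorem opNormOn_mul_le (Q X : E →L[ℝ] E) : opNormOn V (Q * X) ≤ ‖Q‖ * opNormOn V X :=
  Q.opNorm_comp_le (X.comp V.subtypeL)

theorem opNormOn_le_norm_sub_add (X Y : E →L[ℝ] E) :
    opNormOn V X ≤ ‖X - Y‖ + opNormOn V Y :=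
  calc opNormOn V X = ‖(X - Y).comp V.subtypeL + Y.comp V.subtypeL‖ := by
        rw [← ContinuousLinearMap.add_comp, sub_add_cancel]; rfl
    _ ≤ ‖(X - Y).comp V.subtypeL‖ + opNormOn V Y := norm_add_le (E := V →L[ℝ] E) _ _
    _ ≤ ‖X - Y‖ + opNormOn V Y := by
        gcongr
        exact ((X - Y).opNorm_comp_le _).trans
          (mul_le_of_le_one_right (norm_nonneg _) (Submodule.norm_subtypeL_le V))

end OpNormOn

section Contraction

variable {ι E : Type*} [NormedAddCommGroup E] [NormedSpace ℝ E] [FiniteDimensional ℝ E]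
  {T : ι → E →L[ℝ] E} {S : Set ι} {B : ℝ}

theorem tendsto_opNormOn_seqLeftProd (hT : LeftProductsConverge T)
    (h0 : fixedSpace T S ⊓ displacementSpace T S = ⊥) (hS : S.Nonempty) {b : ℕ → List ι}
    (hb : ∀ t a, a ∈ b t ↔ a ∈ S) :
    Tendsto (fun i => opNormOn (displacementSpace T S) (seqLeftProd (wordProd T ∘ b) i))
      atTop (𝓝 0) := by
  obtain ⟨a₀, ha₀⟩ := hS
  obtain ⟨d, s, hs, hdb, hrec, hds⟩ :=
    exists_seq_seqLeftProd_eq T b fun t => List.ne_nil_of_mem ((hb t a₀).2 ha₀)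
  obtain ⟨L, hL⟩ := hT d
  have hdS (m : ℕ) : d m ∈ S := by
    obtain ⟨t, ht⟩ := hdb m
    exact (hb t _).1 ht
  have hL0 := opNormOn_eq_zero _ fun y hy =>
    apply_eq_zero_of_tendsto h0 hdS (fun a ha => hrec a fun t => (hb t a).2 ha) hL hy
  have h := ((continuous_opNormOn (displacementSpace T S)).tendsto L).comp
    (hL.comp hs.tendsto_atTop)
  rw [hL0] at h
  exact h.congr fun i => by simp only [Function.comp_apply, hds]

theorem exists_opNormOn_seqLeftProd_lt (hT : LeftProductsConverge T)
    (h0 : fixedSpace T S ⊓ displacementSpace T S = ⊥) (hS : S.Nonempty)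
    (hB : ∀ Z ∈ productClosure T, ‖Z‖ ≤ B) {H : ℕ → E →L[ℝ] E}
    (hH : ∀ t, H t ∈ closure (wordProd T '' {w | ∀ a, a ∈ w ↔ a ∈ S})) {δ : ℝ} (hδ : 0 < δ) :
    ∃ i, opNormOn (displacementSpace T S) (seqLeftProd H i) < δ := by
  obtain ⟨η, hη, hηδ⟩ : ∃ η > 0, B ^ 2 * (η * 2) ≤ δ / 2 := by
    refine ⟨δ / (4 * (B ^ 2 + 1)), by positivity, ?_⟩
    calc B ^ 2 * (δ / (4 * (B ^ 2 + 1)) * 2) = δ / 2 * (B ^ 2 / (B ^ 2 + 1)) := by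
          field_simp; ring
      _ ≤ δ / 2 :=
          mul_le_of_le_one_right (by positivity) ((div_le_one (by positivity)).2 (by linarith))
  have happrox (t : ℕ) :
      ∃ w, (∀ a, a ∈ w ↔ a ∈ S) ∧ ‖H t - wordProd T w‖ < η * (1 / 2) ^ t := by
    obtain ⟨_, ⟨w, hw, rfl⟩, h⟩ := Metric.mem_closure_iff.1 (hH t) (η * (1 / 2) ^ t) (by positivity)
    exact ⟨w, hw, by rwa [← dist_eq_norm]⟩
  choose b hb hHb using happrox
  obtain ⟨i, hi⟩ := ((tendsto_opNormOn_seqLeftProd hT h0 hS hb).eventually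
    (gt_mem_nhds (half_pos hδ))).exists
  have hHmem (t : ℕ) : H t ∈ productClosure T :=
    closure_minimal (Set.image_subset_iff.2 fun w _ => wordProd_mem_productClosure (T := T) w)
      isClosed_productClosure (hH t)
  have hdiff : ‖seqLeftProd H i - seqLeftProd (wordProd T ∘ b) i‖ ≤ δ / 2 := by
    have h := norm_mul_sub_seqLeftProd_le hB hHmem (fun t => wordProd_mem_productClosure (b t))
      i 1 (one_mem _)
    rw [one_mul] at h
    refine h.trans ?_
    calc B ^ 2 * ∑ t ∈ Finset.range i, ‖H t - (wordProd T ∘ b) t‖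
        ≤ B ^ 2 * ∑ t ∈ Finset.range i, η * (1 / 2) ^ t := by
          gcongr with t; exact (hHb t).le
      _ ≤ B ^ 2 * (η * 2) := by
          rw [← Finset.mul_sum]; gcongr; exact sum_geometric_two_le i
      _ ≤ δ / 2 := hηδ
  refine ⟨i, ?_⟩
  linarith [opNormOn_le_norm_sub_add (displacementSpace T S) (seqLeftProd H i)
    (seqLeftProd (wordProd T ∘ b) i)]

/-- If not, a limit of the factors of bad products, taken in the compact closure of the products
of complete words, would contradict `exists_opNormOn_seqLeftProd_lt`. -/
theorem exists_forall_opNormOn_seqLeftProd_le (hT : LeftProductsConverge T)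
    (h0 : fixedSpace T S ⊓ displacementSpace T S = ⊥) (hS : S.Nonempty)
    (hB : ∀ Z ∈ productClosure T, ‖Z‖ ≤ B) {ε : ℝ} (hε : 0 < ε) :
    ∃ M, ∀ b : ℕ → List ι, (∀ t a, a ∈ b t ↔ a ∈ S) →
      opNormOn (displacementSpace T S) (seqLeftProd (wordProd T ∘ b) M) ≤ ε := by
  by_contra! h
  choose b hb hbig using h
  have hB0 : 0 ≤ B := (norm_nonneg _).trans (hB 1 (one_mem _))
  have hlow (M i : ℕ) (hiM : i ≤ M) :
      ε ≤ B * opNormOn (displacementSpace T S) (seqLeftProd (wordProd T ∘ b M) i) := by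
    obtain ⟨Q, hQ, hM⟩ := exists_mem_seqLeftProd_eq_mul
      (fun t => wordProd_mem_productClosure (T := T) (b M t)) hiM
    calc ε ≤ opNormOn _ (seqLeftProd (wordProd T ∘ b M) M) := (hbig M).le
      _ ≤ ‖Q‖ * opNormOn _ (seqLeftProd (wordProd T ∘ b M) i) := hM ▸ opNormOn_mul_le _ _ _
      _ ≤ _ := mul_le_mul_of_nonneg_right (hB Q hQ) (opNormOn_nonneg _ _)
  obtain ⟨H, -, φ, hφ, hlim⟩ :=
    (isCompact_univ_pi fun _ => isCompact_closedBall (0 : E →L[ℝ] E) B).tendsto_subseq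
      (x := fun M => wordProd T ∘ b M) fun M t _ => by
        simpa using hB _ (wordProd_mem_productClosure (b M t))
  have hH (t : ℕ) : H t ∈ closure (wordProd T '' {w | ∀ a, a ∈ w ↔ a ∈ S}) :=
    mem_closure_of_tendsto (((continuous_apply t).tendsto H).comp hlim)
      (Eventually.of_forall fun M => ⟨b (φ M) t, hb _ t, rfl⟩)
  obtain ⟨i, hi⟩ := exists_opNormOn_seqLeftProd_lt hT h0 hS hB hH
    (δ := ε / (B + 1)) (by positivity)
  have hcont : Continuous fun F : ℕ → E →L[ℝ] E =>
      B * opNormOn (displacementSpace T S) (seqLeftProd F i) :=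
    continuous_const.mul ((continuous_opNormOn _).comp (continuous_seqLeftProd i))
  have hge := ge_of_tendsto ((hcont.tendsto H).comp hlim)
    ((eventually_ge_atTop i).mono fun M hM => hlow (φ M) i (hM.trans (hφ.id_le M)))
  have : B * opNormOn (displacementSpace T S) (seqLeftProd H i) ≤ B * (ε / (B + 1)) := by
    gcongr
  rw [mul_div_assoc', le_div_iff₀ (by positivity)] at this
  nlinarith

end Contraction

section RightProducts

variable {ι E : Type*} [NormedAddCommGroup E] [NormedSpace ℝ E]
  {T : ι → E →L[ℝ] E} {S : Set ι} {d : ℕ → ι}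

theorem exists_map_range_eq_append [Finite ι] (hdS : ∀ m, d m ∈ S)
    (hrec : ∀ a ∈ S, ∃ᶠ m in atTop, d m = a) (m : ℕ) :
    ∃ m' w, (∀ a, a ∈ w ↔ a ∈ S) ∧ (List.range m').map d = (List.range m).map d ++ w := by
  have hcover : ∀ᶠ N in atTop, ∀ a, a ∈ S → ∃ p, m ≤ p ∧ p < N ∧ d p = a :=
    eventually_all.2 fun a => by
      by_cases ha : a ∈ S
      · obtain ⟨p, hp, hpa⟩ := frequently_atTop.1 (hrec a ha) m
        exact (eventually_gt_atTop p).mono fun N hN _ => ⟨p, hp, hN, hpa⟩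
      · exact Eventually.of_forall fun _ h => absurd h ha
  obtain ⟨N, hN, hmN⟩ := (hcover.and (eventually_ge_atTop m)).exists
  refine ⟨N, (List.range (N - m)).map fun q => d (m + q), fun a => ⟨?_, fun ha => ?_⟩, ?_⟩
  · simp only [List.mem_map, List.mem_range]
    rintro ⟨q, -, rfl⟩
    exact hdS _
  · obtain ⟨p, hmp, hpN, rfl⟩ := hN a ha
    exact List.mem_map.2 ⟨p - m, List.mem_range.2 (by omega), by rw [Nat.add_sub_cancel' hmp]⟩
  · conv_lhs => rw [← Nat.add_sub_cancel' hmN, List.range_add, List.map_append, List.map_map]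
    rfl

theorem exists_wordProd_map_range_eq [Finite ι] (hdS : ∀ m, d m ∈ S)
    (hrec : ∀ a ∈ S, ∃ᶠ m in atTop, d m = a) (M : ℕ) :
    ∃ m, ∃ b : ℕ → List ι, (∀ t a, a ∈ b t ↔ a ∈ S) ∧
      wordProd T ((List.range m).map d) = seqLeftProd (wordProd T ∘ b) M := by
  induction M with
  | zero =>
    obtain ⟨-, w, hw, -⟩ := exists_map_range_eq_append hdS hrec 0
    exact ⟨0, fun _ => w, fun _ => hw, rfl⟩
  | succ M ih =>
    obtain ⟨m, b, hb, hm⟩ := ih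
    obtain ⟨m', w, hw, hm'⟩ := exists_map_range_eq_append hdS hrec m
    refine ⟨m', Stream'.cons w b, ?_, ?_⟩
    · rintro (_ | t)
      exacts [hw, hb t]
    · rw [hm', wordProd_append, hm, seqLeftProd_succ']
      rfl

theorem norm_wordProd_append_sub_le {B : ℝ} (hB : ∀ Z ∈ productClosure T, ‖Z‖ ≤ B)
    {u v : List ι} (hu : ∀ a ∈ u, a ∈ S) (hv : ∀ a ∈ v, a ∈ S) {L : E →L[ℝ] E}
    (hLN : ∀ x, L x ∈ fixedSpace T S) (hLR : ∀ x, L x - x ∈ displacementSpace T S) :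
    ‖wordProd T (u ++ v) - L‖ ≤
      opNormOn (displacementSpace T S) (wordProd T u) * (B * (1 + ‖L‖)) := by
  have hB0 : 0 ≤ B := (norm_nonneg _).trans (hB 1 (one_mem _))
  refine ContinuousLinearMap.opNorm_le_bound _
    (mul_nonneg (opNormOn_nonneg _ _) (by positivity)) fun x => ?_
  have hfix : wordProd T (u ++ v) (L x) = L x :=
    wordProd_apply_of_mem_fixedSpace (fun a ha => (List.mem_append.1 ha).elim (hu a) (hv a))
      (hLN x)
  have hy : wordProd T v (x - L x) ∈ displacementSpace T S :=
    wordProd_apply_mem_displacementSpace hv (by simpa using Submodule.neg_mem _ (hLR x))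
  rw [_root_.sub_apply, ← hfix, ← map_sub, wordProd_append, mul_apply_eq_comp]
  calc _ ≤ opNormOn _ (wordProd T u) * ‖wordProd T v (x - L x)‖ :=
        norm_apply_le_opNormOn _ _ hy
    _ ≤ opNormOn _ (wordProd T u) * (B * ((1 + ‖L‖) * ‖x‖)) := by
        gcongr
        · exact opNormOn_nonneg _ _
        refine ((wordProd T v).le_opNorm _).trans
          (mul_le_mul (hB _ (wordProd_mem_productClosure v)) ?_ (norm_nonneg _) hB0)
        calc ‖x - L x‖ ≤ ‖x‖ + ‖L‖ * ‖x‖ := (norm_sub_le _ _).trans (by gcongr; exact L.le_opNorm x)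
          _ = (1 + ‖L‖) * ‖x‖ := by ring
    _ = _ := by ring

variable [FiniteDimensional ℝ E]

/-- The limit is the limit `L` of the left products: the right products fix the range of `L`,
which lies in `N_S`, and the range of `1 - L` lies in `R_S`, where they eventually contract. -/
theorem tendsto_wordProd_map_range_of_recurrent [Finite ι] (hT : LeftProductsConverge T)
    (h0 : fixedSpace T S ⊓ displacementSpace T S = ⊥) (hdS : ∀ m, d m ∈ S)
    (hrec : ∀ a ∈ S, ∃ᶠ m in atTop, d m = a) :
    ∃ L, Tendsto (fun m => wordProd T ((List.range m).map d)) atTop (𝓝 L) := by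
  obtain ⟨B, hB⟩ := exists_norm_le_of_mem_productClosure hT
  have hB0 : 0 ≤ B := (norm_nonneg _).trans (hB 1 (one_mem _))
  obtain ⟨L, hL⟩ := hT d
  refine ⟨L, Metric.tendsto_atTop.2 fun ε hε => ?_⟩
  set C := B * (1 + ‖L‖)
  obtain ⟨M, hM⟩ := exists_forall_opNormOn_seqLeftProd_le hT h0 ⟨d 0, hdS 0⟩ hB
    (ε := ε / (C + 1)) (by positivity)
  obtain ⟨m₁, b, hb, hm₁⟩ := exists_wordProd_map_range_eq (T := T) hdS hrec M
  refine ⟨m₁, fun m hm => ?_⟩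
  obtain ⟨p, rfl⟩ := Nat.exists_eq_add_of_le hm
  have hsplit : (List.range (m₁ + p)).map d =
      (List.range m₁).map d ++ (List.range p).map fun q => d (m₁ + q) := by
    rw [List.range_add, List.map_append, List.map_map]
    rfl
  have hbound := norm_wordProd_append_sub_le hB (u := (List.range m₁).map d)
    (v := (List.range p).map fun q => d (m₁ + q)) (by simpa using fun i _ => hdS i)
    (by simpa using fun i _ => hdS _) (apply_mem_fixedSpace_of_tendsto hrec hL)
    (apply_sub_mem_displacementSpace_of_tendsto hdS hL)
  rw [← hsplit, hm₁] at hbound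
  rw [dist_eq_norm]
  refine (hbound.trans (mul_le_mul_of_nonneg_right (hM b hb) (by positivity))).trans_lt ?_
  rw [div_mul_eq_mul_div, div_lt_iff₀ (by positivity)]
  nlinarith

theorem tendsto_wordProd_map_range [Finite ι] (hT : LeftProductsConverge T)
    (h0 : ∀ S, fixedSpace T S ⊓ displacementSpace T S = ⊥) (d : ℕ → ι) :
    ∃ R, Tendsto (fun m => wordProd T ((List.range m).map d)) atTop (𝓝 R) := by
  set S := {a | ∃ᶠ m in atTop, d m = a}
  have hev : ∀ᶠ m in atTop, ∀ a, d m = a → a ∈ S := eventually_all.2 fun a => by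
    by_cases ha : a ∈ S
    · exact Eventually.of_forall fun _ _ => ha
    · exact (not_frequently.1 ha).mono fun m hm h => absurd h hm
  obtain ⟨m₀, hm₀⟩ := eventually_atTop.1 hev
  have hrec (a : ι) (ha : a ∈ S) : ∃ᶠ m in atTop, d (m₀ + m) = a :=
    frequently_atTop.2 fun N => by
      obtain ⟨m, hm, hma⟩ := frequently_atTop.1 ha (m₀ + N)
      exact ⟨m - m₀, by omega, by rwa [Nat.add_sub_cancel' (by omega)]⟩
  obtain ⟨L, hL⟩ := tendsto_wordProd_map_range_of_recurrent hT (h0 S)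
    (fun m => hm₀ (m₀ + m) (Nat.le_add_right _ _) _ rfl) hrec
  refine ⟨wordProd T ((List.range m₀).map d) * L, (tendsto_add_atTop_iff_nat m₀).1 ?_⟩
  refine (hL.const_mul _).congr fun m => ?_
  rw [add_comm, List.range_add, List.map_append, wordProd_append, List.map_map]
  rfl

end RightProducts

section Matrices

noncomputable def matrixToCLM (n : ℕ) :
    Matrix (Fin n) (Fin n) ℝ ≃ₐ[ℝ] ((Fin n → ℝ) →L[ℝ] (Fin n → ℝ)) :=
  Matrix.toLinAlgEquiv'.trans (Module.End.toContinuousLinearMap _)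

variable {n k : ℕ} (A : Fin k → Matrix (Fin n) (Fin n) ℝ)

theorem isInducing_matrixToCLM : IsInducing (matrixToCLM n) :=
  (matrixToCLM n).toLinearEquiv.toContinuousLinearEquiv.toHomeomorph.isInducing

theorem matrixToCLM_leftProd (j : ℕ → Fin k) (m : ℕ) :
    matrixToCLM n (leftProd A j m) = seqLeftProd (matrixToCLM n ∘ A ∘ j) m := by
  induction m with
  | zero => simp [leftProd]
  | succ m ih => simp [leftProd, ih]

theorem matrixToCLM_rightProd (j : ℕ → Fin k) (m : ℕ) :
    matrixToCLM n (rightProd A j m) = wordProd (matrixToCLM n ∘ A) ((List.range m).map j) := by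
  induction m with
  | zero => simp [rightProd]
  | succ m ih => simp [rightProd, ih, List.range_succ]

theorem mulVecLin_one_sub (a : Fin k) :
    Matrix.mulVecLin (1 - A a) = ((1 - matrixToCLM n (A a) : _ →L[ℝ] _) : _ →ₗ[ℝ] _) := by
  rw [← map_one (matrixToCLM n), ← map_sub]
  rfl

theorem Nspace_eq_fixedSpace (S : Set (Fin k)) :
    Nspace A S = fixedSpace (matrixToCLM n ∘ A) S := by
  simp only [Nspace, fixedSpace, mulVecLin_one_sub, Function.comp_apply]

theorem Rspace_eq_displacementSpace (S : Set (Fin k)) :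
    Rspace A S = displacementSpace (matrixToCLM n ∘ A) S := by
  simp only [Rspace, displacementSpace, mulVecLin_one_sub, Function.comp_apply]

end Matrices

/-- If Σ is LCP and 0-transversal then Σ is RCP. -/
theorem lcp_zero_transversal_imp_rcp {n k : ℕ} (A : Fin k → Matrix (Fin n) (Fin n) ℝ)
    (hLCP : IsLCP A) (h0 : IsZeroTransversal A) : IsRCP A := by
  have hT : LeftProductsConverge (matrixToCLM n ∘ A) := fun j => by
    obtain ⟨L, hL⟩ := hLCP j
    refine ⟨matrixToCLM n L, ?_⟩
    simpa [Function.comp_def, matrixToCLM_leftProd] using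
      isInducing_matrixToCLM.tendsto_nhds_iff.1 hL
  have h0' (S : Set (Fin k)) :
      fixedSpace (matrixToCLM n ∘ A) S ⊓ displacementSpace (matrixToCLM n ∘ A) S = ⊥ := by
    rw [← Nspace_eq_fixedSpace, ← Rspace_eq_displacementSpace]
    exact h0 S
  intro j
  obtain ⟨R, hR⟩ := tendsto_wordProd_map_range hT h0' j
  obtain ⟨R, rfl⟩ := (matrixToCLM n).surjective R
  refine ⟨R, isInducing_matrixToCLM.tendsto_nhds_iff.2 ?_⟩
  simpa [Function.comp_def, matrixToCLM_rightProd] using hR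
end

section
/- Let Σ = {P_j : j ∈ J} be a finite set of real n×n matrices such that each P_j is the orthogonal projection of ℝⁿ onto a linear subspace L_j ⊆ ℝⁿ. Then Σ is LCP, RCP, and transversal. -/
/-!
An orthogonal projection is a paracontraction: it is continuous and moves every point outside its
range strictly closer to each point of the range (Pythagoras). By the theorem of Elsner,
Koltracht and Neumann, every orbit of finitely many paracontractions with a common fixed point
converges; applied to the columns of the left products this gives LCP. Projection matrices are
symmetric, so right products are transposes of left products, which gives RCP. Finally
`N_{J'} = ⋂ L_j` and `R_{J'} = ∑ L_jᗮ = (⋂ L_j)ᗮ` are orthogonal complements of each other.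
-/

open Filter Topology Matrix

attribute [local instance] Matrix.normedAddCommGroup

def IsParacontraction {X : Type*} [PseudoMetricSpace X] (T : X → X) : Prop :=
  Continuous T ∧ ∀ x w, T w = w → T x ≠ x → dist (T x) w < dist x w

namespace IsParacontraction

variable {X : Type*} [PseudoMetricSpace X]

lemma dist_le {T : X → X} (hT : IsParacontraction T) {w : X} (hw : T w = w) (x : X) :
    dist (T x) w ≤ dist x w := by
  by_cases hx : T x = x
  · rw [hx]
  · exact (hT.2 x w hw hx).le

variable {ι : Type*} {T : ι → X → X} {j : ℕ → ι} {x : ℕ → X}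

theorem exists_tendsto [ProperSpace X] [Finite ι] (hT : ∀ i, IsParacontraction (T i))
    {z : X} (hz : ∀ i, T i z = z) (hx : ∀ m, x (m + 1) = T (j m) (x m)) :
    ∃ y, Tendsto x atTop (𝓝 y) := by
  have hanti : Antitone fun m => dist (x m) z := antitone_nat_of_succ_le fun m => by
    rw [hx]; exact (hT _).dist_le (hz _) _
  obtain ⟨y, -, φ, hφ, hφy⟩ := (isCompact_closedBall z (dist (x 0) z)).tendsto_subseq
    fun m => Metric.mem_closedBall.2 (hanti (Nat.zero_le m))
  have hbdd : BddBelow (Set.range fun m => dist (x m) z) :=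
    ⟨0, Set.forall_mem_range.2 fun _ => dist_nonneg⟩
  set c := ⨅ m, dist (x m) z
  have hyc : dist y z = c := tendsto_nhds_unique (hφy.dist tendsto_const_nhds)
    ((tendsto_atTop_ciInf hanti hbdd).comp hφ.tendsto_atTop)
  -- A map not fixing `y` sends points near `y` to distance `< c` from `z`, which the orbit never
  -- reaches; so near `y` only maps fixing `y` are applied.
  obtain ⟨ρ, hρ, hfix⟩ : ∃ ρ > 0, ∀ m, dist (x m) y < ρ → T (j m) y = y := by
    have : ∀ᶠ u in 𝓝 y, ∀ i, T i y ≠ y → dist (T i u) z < c := by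
      refine eventually_all.2 fun i => ?_
      by_cases h : T i y = y
      · simp [h]
      · have hlt : dist (T i y) z < c := hyc ▸ (hT i).2 y z (hz i) h
        exact (((hT i).1.tendsto y).dist tendsto_const_nhds).eventually (gt_mem_nhds hlt)
          |>.mono fun _ hu _ => hu
    obtain ⟨ρ, hρ, h⟩ := Metric.eventually_nhds_iff.1 this
    refine ⟨ρ, hρ, fun m hm => by_contra fun hne => ?_⟩
    exact (h hm _ hne).not_ge (hx m ▸ ciInf_le hbdd (m + 1))
  have hstay : ∀ m, dist (x m) y < ρ → ∀ p, dist (x (m + p)) y ≤ dist (x m) y := by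
    intro m hm p
    induction p with
    | zero => rfl
    | succ p ih =>
      calc dist (x (m + (p + 1))) y = dist (T (j (m + p)) (x (m + p))) y := by rw [← hx]; rfl
        _ ≤ dist (x (m + p)) y := (hT _).dist_le (hfix _ (ih.trans_lt hm)) _
        _ ≤ dist (x m) y := ih
  refine ⟨y, Metric.tendsto_atTop.2 fun ε hε => ?_⟩
  obtain ⟨N, hN⟩ := Metric.tendsto_atTop.1 hφy (min ε ρ) (lt_min hε hρ)
  have hclose := hN N le_rfl
  refine ⟨φ N, fun m hm => ?_⟩
  obtain ⟨p, rfl⟩ := Nat.exists_eq_add_of_le hm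
  exact (hstay _ (hclose.trans_le (min_le_right _ _)) p).trans_lt
    (hclose.trans_le (min_le_left _ _))

end IsParacontraction

section OrthogonalProjection

variable {E : Type*} [NormedAddCommGroup E] [InnerProductSpace ℝ E]

theorem Submodule.isParacontraction_starProjection (K : Submodule ℝ E)
    [K.HasOrthogonalProjection] : IsParacontraction K.starProjection := by
  refine ⟨K.starProjection.continuous, fun x w hw hx => ?_⟩
  rw [starProjection_eq_self_iff] at hw
  have hperp : inner ℝ (K.starProjection x - w) (x - K.starProjection x) = 0 :=
    K.inner_right_of_mem_orthogonal (K.sub_mem (K.starProjection_apply_mem x) hw)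
      (K.sub_starProjection_mem_orthogonal x)
  have hpyth := norm_add_sq_eq_norm_sq_add_norm_sq_real hperp
  rw [sub_add_sub_cancel'] at hpyth
  have hne : 0 < ‖x - K.starProjection x‖ := norm_pos_iff.2 (sub_ne_zero.2 (Ne.symm hx))
  rw [dist_eq_norm, dist_eq_norm]
  nlinarith [norm_nonneg (K.starProjection x - w), norm_nonneg (x - w)]

theorem Submodule.biSup_orthogonal_eq_orthogonal_biInf [FiniteDimensional ℝ E] {ι : Type*}
    (K : ι → Submodule ℝ E) (J : Set ι) : ⨆ i ∈ J, (K i)ᗮ = (⨅ i ∈ J, K i)ᗮ := by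
  simp_rw [iSup_subtype', iInf_subtype']
  rw [← (⨆ i : J, (K i)ᗮ).orthogonal_orthogonal, ← iInf_orthogonal]
  simp only [orthogonal_orthogonal]

end OrthogonalProjection

section MatrixLemmas

variable {m n R : Type*} [Fintype n] [DecidableEq n] [CommRing R] (p q : ENNReal)

theorem Matrix.ker_mulVecLin_eq_map_ker_toLpLin (B : Matrix m n R) :
    LinearMap.ker B.mulVecLin =
      (LinearMap.ker (toLpLin p q B)).map (WithLp.linearEquiv p R (n → R)).toLinearMap := by
  ext v
  simp [Submodule.mem_map_equiv, toLpLin_apply]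

theorem Matrix.range_mulVecLin_eq_map_range_toLpLin (B : Matrix m n R) :
    LinearMap.range B.mulVecLin =
      (LinearMap.range (toLpLin p q B)).map (WithLp.linearEquiv q R (m → R)).toLinearMap := by
  ext v
  simp only [LinearMap.mem_range, mulVecLin_apply, Submodule.mem_map_equiv, toLpLin_apply]
  exact ⟨fun ⟨y, hy⟩ => ⟨WithLp.toLp p y, by simp [hy]⟩, fun ⟨y, hy⟩ => ⟨y.ofLp, by simpa using hy⟩⟩

theorem Matrix.exists_tendsto_of_forall_exists_tendsto_toEuclideanLin {α : Type*}
    {l : Filter α} {M : α → Matrix n n ℝ}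
    (h : ∀ v, ∃ w, Tendsto (fun t => toEuclideanLin (M t) v) l (𝓝 w)) :
    ∃ N, Tendsto M l (𝓝 N) := by
  choose w hw using fun b => h (WithLp.toLp 2 (Pi.single b 1))
  refine ⟨of fun a b => w b a, tendsto_pi_nhds.2 fun a => tendsto_pi_nhds.2 fun b => ?_⟩
  have := ((PiLp.continuous_apply 2 _ a).tendsto _).comp (hw b)
  simpa [Function.comp_def, toLpLin_apply, mulVec_single_one] using this

section

variable {A : Matrix n n ℝ} {K : Submodule ℝ (EuclideanSpace ℝ n)}

theorem Matrix.transpose_eq_self_of_toEuclideanLin_eq_starProjection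
    (hA : toEuclideanLin A = (K.starProjection : _ →ₗ[ℝ] _)) : Aᵀ = A := by
  have : A.IsHermitian := isSymmetric_toEuclideanLin_iff.1 (hA ▸ K.starProjection_isSymmetric)
  rwa [IsHermitian, conjTranspose_eq_transpose_of_trivial] at this

theorem Matrix.toEuclideanLin_one_sub_of_toEuclideanLin_eq_starProjection
    (hA : toEuclideanLin A = (K.starProjection : _ →ₗ[ℝ] _)) :
    toEuclideanLin (1 - A) = (Kᗮ.starProjection : _ →ₗ[ℝ] _) := by
  rw [map_sub, hA, toLpLin_one, Submodule.starProjection_orthogonal]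
  rfl

theorem Matrix.ker_mulVecLin_one_sub_of_toEuclideanLin_eq_starProjection
    (hA : toEuclideanLin A = (K.starProjection : _ →ₗ[ℝ] _)) :
    LinearMap.ker (1 - A).mulVecLin = K.map (WithLp.linearEquiv 2 ℝ (n → ℝ)).toLinearMap := by
  rw [ker_mulVecLin_eq_map_ker_toLpLin 2 2,
    toEuclideanLin_one_sub_of_toEuclideanLin_eq_starProjection hA,
    Submodule.ker_starProjection, Submodule.orthogonal_orthogonal]

theorem Matrix.range_mulVecLin_one_sub_of_toEuclideanLin_eq_starProjection
    (hA : toEuclideanLin A = (K.starProjection : _ →ₗ[ℝ] _)) :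
    LinearMap.range (1 - A).mulVecLin = Kᗮ.map (WithLp.linearEquiv 2 ℝ (n → ℝ)).toLinearMap := by
  rw [range_mulVecLin_eq_map_range_toLpLin 2 2,
    toEuclideanLin_one_sub_of_toEuclideanLin_eq_starProjection hA, Submodule.range_starProjection]

end

end MatrixLemmas

section Products

variable {n k : ℕ}

theorem rightProd_eq_transpose_leftProd_transpose (A : Fin k → Matrix (Fin n) (Fin n) ℝ)
    (j : ℕ → Fin k) (m : ℕ) : rightProd A j m = (leftProd (fun i => (A i)ᵀ) j m)ᵀ := by
  induction m with
  | zero => simp [rightProd, leftProd]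
  | succ m ih => simp [rightProd, leftProd, ih, transpose_mul]

theorem IsLCP.isRCP_of_transpose {A : Fin k → Matrix (Fin n) (Fin n) ℝ}
    (h : IsLCP fun i => (A i)ᵀ) : IsRCP A := fun j => by
  obtain ⟨L, hL⟩ := h j
  exact ⟨Lᵀ, ((continuous_id.matrix_transpose.tendsto L).comp hL).congr fun m =>
    (rightProd_eq_transpose_leftProd_transpose A j m).symm⟩

theorem isLCP_of_isParacontraction {A : Fin k → Matrix (Fin n) (Fin n) ℝ}
    (hA : ∀ i, IsParacontraction (toEuclideanLin (A i))) : IsLCP A := fun j =>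
  exists_tendsto_of_forall_exists_tendsto_toEuclideanLin fun v =>
    IsParacontraction.exists_tendsto hA (z := 0) (j := j) (fun i => map_zero _)
      (x := fun m => toEuclideanLin (leftProd A j m) v) fun m => by simp [leftProd]

end Products

theorem isTransversal_of_toEuclideanLin_eq_starProjection {n k : ℕ}
    {A : Fin k → Matrix (Fin n) (Fin n) ℝ} {L : Fin k → Submodule ℝ (EuclideanSpace ℝ (Fin n))}
    (hA : ∀ i, toEuclideanLin (A i) = ((L i).starProjection : _ →ₗ[ℝ] _)) :
    IsTransversal A := by
  have hIsCompl : ∀ J, IsCompl (Nspace A J) (Rspace A J) := fun J => by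
    have := (Submodule.orderIsoMapComap (WithLp.linearEquiv 2 ℝ (Fin n → ℝ))).isCompl
      (Submodule.biSup_orthogonal_eq_orthogonal_biInf L J ▸ (⨅ i ∈ J, L i).isCompl_orthogonal)
    simp only [Nspace, Rspace, ker_mulVecLin_one_sub_of_toEuclideanLin_eq_starProjection (hA _),
      range_mulVecLin_one_sub_of_toEuclideanLin_eq_starProjection (hA _)]
    simpa only [OrderIso.map_iInf, OrderIso.map_iSup, Submodule.orderIsoMapComap_apply] using this
  exact ⟨fun J => (hIsCompl J).inf_eq_bot, fun J => (hIsCompl J).sup_eq_top⟩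

/-- a finite family of orthogonal projection matrices (each `A_j`
acting as the orthogonal projection of ℝⁿ onto some linear subspace `L_j`)
is LCP, RCP, and transversal. -/
theorem orthogonal_projections_cp {n k : ℕ}
    (A : Fin k → Matrix (Fin n) (Fin n) ℝ)
    (hproj : ∀ j : Fin k, ∃ L : Submodule ℝ (EuclideanSpace ℝ (Fin n)),
      ∀ x : EuclideanSpace ℝ (Fin n),
        Matrix.toEuclideanLin (A j) x
          = (Submodule.orthogonalProjection L x : EuclideanSpace ℝ (Fin n))) :
    IsLCP A ∧ IsRCP A ∧ IsTransversal A := by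
  choose L hL using hproj
  have hA : ∀ i, toEuclideanLin (A i) = ((L i).starProjection : _ →ₗ[ℝ] _) :=
    fun i => LinearMap.ext (hL i)
  have hsymm : (fun i => (A i)ᵀ) = A :=
    funext fun i => transpose_eq_self_of_toEuclideanLin_eq_starProjection (hA i)
  have hLCP : IsLCP A := isLCP_of_isParacontraction fun i => by
    rw [hA]; exact (L i).isParacontraction_starProjection
  exact ⟨hLCP, (hsymm ▸ hLCP).isRCP_of_transpose,
    isTransversal_of_toEuclideanLin_eq_starProjection hA⟩
end

section
/- Let Σ = {A_j : j ∈ J} be a finite set of real n×n matrices that is LCP and RCP. If every matrix A ∈ Σ has spectral radius strictly less than 1 (i.e., every complex eigenvalue of A has modulus < 1), then for every sequence (j_i)_{i≥1} in J the left products A_{j_m} ··· A_{j_1} converge to the zero matrix as m → ∞. -/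
/-!
Pigeonhole gives a matrix `A a` that occurs infinitely often in the sequence, so passing to the
limit in `L_{m+1} = A a * L_m` along those indices shows that the limit `L` of the left products
satisfies `A a * L = L`. Since `1` is not an eigenvalue of `A a`, the matrix `1 - A a` is
invertible, hence `L = 0`.
-/

open Filter Topology Matrix

attribute [local instance] Matrix.normedAddCommGroup

theorem Filter.exists_frequently_eq_of_finite {α : Type*} [Finite α] (u : ℕ → α) :
    ∃ a, ∃ᶠ m in atTop, u m = a := by
  obtain ⟨a, ha⟩ := Finite.exists_infinite_fiber u
  exact ⟨a, Nat.frequently_atTop_iff_infinite.2 (Set.infinite_coe_iff.1 ha)⟩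

theorem Filter.Tendsto.apply_eq_of_frequently_succ_eq {X : Type*} [TopologicalSpace X]
    [T2Space X] {u : ℕ → X} {f : X → X} {L : X} (hu : Tendsto u atTop (𝓝 L))
    (hf : ContinuousAt f L) (hfreq : ∃ᶠ m in atTop, u (m + 1) = f (u m)) : f L = L := by
  set l := atTop ⊓ 𝓟 {m | u (m + 1) = f (u m)}
  have : l.NeBot := frequently_iff_neBot.1 hfreq
  have hstep : ∀ᶠ m in l, f (u m) = u (m + 1) :=
    mem_inf_of_right (mem_principal_self _) |> Eventually.mono <| fun _ h => h.symm
  have hf_lim : Tendsto (fun m => f (u m)) l (𝓝 (f L)) :=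
    (hf.tendsto.comp hu).mono_left inf_le_left
  have hsucc_lim : Tendsto (fun m => u (m + 1)) l (𝓝 L) :=
    ((tendsto_add_atTop_iff_nat 1).2 hu).mono_left inf_le_left
  exact tendsto_nhds_unique (hf_lim.congr' hstep) hsucc_lim

theorem Matrix.map_mem_spectrum_map {n K L : Type*} [Fintype n] [DecidableEq n] [Field K]
    [CommRing L] [Nontrivial L] (A : Matrix n n K) (f : K →+* L) {r : K}
    (hr : r ∈ spectrum K A) : f r ∈ spectrum L (A.map f) := by
  apply mem_spectrum_of_isRoot_charpoly
  rw [charpoly_map, Polynomial.IsRoot, Polynomial.eval_map_apply,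
    (mem_spectrum_iff_isRoot_charpoly.1 hr).eq_zero, map_zero]

theorem eq_zero_of_mul_eq_self_of_one_notMem_spectrum {R A : Type*} [CommSemiring R] [Ring A]
    [Algebra R A] {a x : A} (ha : (1 : R) ∉ spectrum R a) (hx : a * x = x) : x = 0 := by
  have hunit : IsUnit (1 - a) := by simpa using spectrum.notMem_iff.1 ha
  exact hunit.mul_right_eq_zero.1 (by rw [sub_mul, one_mul, hx, sub_self])

theorem leftProd_tendsto_zero_of_spectral_radius_lt_one_general {n k : ℕ}
    (A : Fin k → Matrix (Fin n) (Fin n) ℝ) (hLCP : IsLCP A)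
    (hspec : ∀ (a : Fin k) (μ : ℂ),
      μ ∈ spectrum ℂ ((A a).map (algebraMap ℝ ℂ)) → ‖μ‖ < 1) :
    ∀ j : ℕ → Fin k,
      Tendsto (leftProd A j) atTop (𝓝 (0 : Matrix (Fin n) (Fin n) ℝ)) := by
  intro j
  obtain ⟨L, hL⟩ := hLCP j
  obtain ⟨a, ha⟩ := exists_frequently_eq_of_finite j
  have hfix : A a * L = L :=
    hL.apply_eq_of_frequently_succ_eq (continuous_const_mul (A a)).continuousAt
      (ha.mono fun m hm => by rw [leftProd, hm])
  have hone : (1 : ℝ) ∉ spectrum ℝ (A a) := fun h => by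
    simpa using hspec a _ ((A a).map_mem_spectrum_map (algebraMap ℝ ℂ) h)
  rwa [eq_zero_of_mul_eq_self_of_one_notMem_spectrum hone hfix] at hL

/-- if Σ is LCP and RCP and every matrix of Σ has all its complex
eigenvalues of modulus `< 1`, then every left product converges to the zero
matrix. -/
theorem leftProd_tendsto_zero_of_spectral_radius_lt_one {n k : ℕ}
    (A : Fin k → Matrix (Fin n) (Fin n) ℝ) (hLCP : IsLCP A) (hRCP : IsRCP A)
    (hspec : ∀ (a : Fin k) (μ : ℂ),
      μ ∈ spectrum ℂ ((A a).map (algebraMap ℝ ℂ)) → ‖μ‖ < 1) :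
    ∀ j : ℕ → Fin k,
      Tendsto (leftProd A j) atTop (𝓝 (0 : Matrix (Fin n) (Fin n) ℝ)) :=
  leftProd_tendsto_zero_of_spectral_radius_lt_one_general A hLCP hspec
end

section
/- Let Σ = {A_j : j ∈ J} be a finite set of real n×n matrices. If Σ is LCP then Σ is product bounded: there exists a constant C > 0 such that every finite product A_{j_1} A_{j_2} ··· A_{j_m} of matrices from Σ (including the empty product, the identity) has matrix norm less than C. -/
/-!
Let `V` be the subspace of vectors whose orbit under all finite products is bounded. By
Banach–Steinhaus on the finite-dimensional space `V`, the products are uniformly bounded on `V`.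
If `x ∉ V`, products carry `x` outside `V` to arbitrarily large norm: otherwise each orbit point
either lies outside `V` with norm at most `R`, or was last to enter `V` from such a point and is
then controlled by the uniform bound on `V`. Iterating this escape and concatenating the words
yields one infinite sequence whose left products are unbounded on `x`, contradicting LCP. Hence
`V` is the whole space, and Banach–Steinhaus bounds all products.
-/

open Filter Topology Matrix

attribute [local instance] Matrix.normedAddCommGroup

open Bornology Set PiNat

theorem PiNat.res_eq_reverse_map_range {α : Type*} (x : ℕ → α) (n : ℕ) :
    res x n = ((List.range n).map x).reverse := by
  induction n with
  | zero => rfl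
  | succ n ih => simp [List.range_succ, ih]

theorem PiNat.exists_res_length_eq_of_isSuffix {α : Type*} {u : ℕ → List α}
    (hsuf : ∀ i, u i <:+ u (i + 1)) (hlen : ∀ i, i ≤ (u i).length) :
    ∃ x : ℕ → α, ∀ i, res x (u i).length = u i := by
  have hpre : ∀ {i i'}, i ≤ i' → (u i).reverse <+: (u i').reverse := fun h =>
    List.reverse_prefix.mpr (Nat.rel_of_forall_rel_succ_of_le _ hsuf h)
  refine ⟨fun m => (u (m + 1)).reverse[m]'(by simpa using hlen (m + 1)), fun i => ?_⟩
  rw [res_eq_reverse_map_range, List.reverse_eq_iff]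
  refine List.ext_getElem (by simp) fun m _ hm => ?_
  simp only [List.getElem_map, List.getElem_range]
  rcases le_total (m + 1) i with h | h
  · exact (hpre h).getElem _
  · exact ((hpre h).getElem hm).symm

theorem PiNat.exists_forall_exists_res_mem {α : Type*} (s : ℕ → Set (List α)) (h0 : [] ∈ s 0)
    (hstep : ∀ i, ∀ u ∈ s i, ∃ v ≠ [], v ++ u ∈ s (i + 1)) :
    ∃ x : ℕ → α, ∀ i, ∃ m, res x m ∈ s i := by
  choose v hv_ne hv_mem using hstep
  let u : (i : ℕ) → s i := fun i =>
    Nat.rec ⟨[], h0⟩ (fun i w => ⟨v i w w.2 ++ w, hv_mem i w w.2⟩) i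
  have hlen : ∀ i, i ≤ (u i).1.length := by
    intro i
    induction i with
    | zero => exact Nat.zero_le _
    | succ i ih =>
      have := List.length_pos_iff.mpr (hv_ne i (u i).1 (u i).2)
      change i + 1 ≤ (v i (u i).1 (u i).2 ++ (u i).1).length
      rw [List.length_append]
      omega
  obtain ⟨x, hx⟩ := exists_res_length_eq_of_isSuffix (u := fun i => (u i).1)
    (fun i => List.suffix_append _ _) hlen
  exact ⟨x, fun i => ⟨_, (hx i).symm ▸ (u i).2⟩⟩

section BoundedOrbit

variable {𝕜 E ι : Type*} [NontriviallyNormedField 𝕜] [NormedAddCommGroup E] [NormedSpace 𝕜 E]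

def boundedOrbit (f : ι → E →L[𝕜] E) : Submodule 𝕜 E where
  carrier := {x | ∃ C, ∀ l : List ι, ‖(l.map f).prod x‖ ≤ C}
  zero_mem' := ⟨0, by simp⟩
  add_mem' := by
    rintro x y ⟨C, hC⟩ ⟨D, hD⟩
    exact ⟨C + D, fun l => by
      rw [map_add]; exact (norm_add_le _ _).trans (add_le_add (hC l) (hD l))⟩
  smul_mem' := by
    rintro c x ⟨C, hC⟩
    exact ⟨‖c‖ * C, fun l => by
      rw [map_smul, norm_smul]; exact mul_le_mul_of_nonneg_left (hC l) (norm_nonneg c)⟩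

variable {f : ι → E →L[𝕜] E}

theorem exists_norm_prod_map_apply_le_of_mem_boundedOrbit [CompleteSpace 𝕜]
    [FiniteDimensional 𝕜 E] :
    ∃ C, 0 ≤ C ∧ ∀ y ∈ boundedOrbit f, ∀ l : List ι, ‖(l.map f).prod y‖ ≤ C * ‖y‖ := by
  have := FiniteDimensional.complete 𝕜 (boundedOrbit f)
  let g (l : List ι) : boundedOrbit f →L[𝕜] E := (l.map f).prod ∘L (boundedOrbit f).subtypeL
  obtain ⟨C, hC⟩ := banach_steinhaus (g := g) fun y => y.2
  refine ⟨C, (norm_nonneg _).trans (hC []), fun y hy l => ?_⟩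
  simpa [g] using (g l).le_of_opNorm_le (hC l) ⟨y, hy⟩

theorem exists_le_norm_prod_map_apply_notMem_boundedOrbit [CompleteSpace 𝕜]
    [FiniteDimensional 𝕜 E] (hf : IsBounded (range f)) {x : E} (hx : x ∉ boundedOrbit f)
    (R : ℝ) : ∃ l : List ι, R ≤ ‖(l.map f).prod x‖ ∧ (l.map f).prod x ∉ boundedOrbit f := by
  by_contra! hR
  replace hR : ∀ l : List ι, (l.map f).prod x ∉ boundedOrbit f → ‖(l.map f).prod x‖ ≤ R :=
    fun l hl => (lt_of_not_ge (mt (hR l) hl)).le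
  obtain ⟨K, hK⟩ := isBounded_iff_forall_norm_le.mp hf
  obtain ⟨C, hC₀, hC⟩ := exists_norm_prod_map_apply_le_of_mem_boundedOrbit (f := f)
  -- Go back to where the orbit last entered `boundedOrbit f`: the point before it had norm `≤ R`.
  have last_entry : ∀ u : List ι, (u.map f).prod x ∈ boundedOrbit f →
      ∃ s, s <:+ u ∧ (s.map f).prod x ∈ boundedOrbit f ∧ ‖(s.map f).prod x‖ ≤ K * R := by
    intro u hu
    induction u with
    | nil => exact absurd hu hx
    | cons a t ih =>
      by_cases ht : (t.map f).prod x ∈ boundedOrbit f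
      · obtain ⟨s, hst, hs⟩ := ih ht
        exact ⟨s, hst.trans (List.suffix_cons a t), hs⟩
      · refine ⟨a :: t, List.suffix_refl _, hu, ?_⟩
        have hK' : ‖f a‖ ≤ K := hK _ (mem_range_self a)
        calc ‖((a :: t).map f).prod x‖ = ‖f a ((t.map f).prod x)‖ := by simp
          _ ≤ ‖f a‖ * ‖(t.map f).prod x‖ := (f a).le_opNorm _
          _ ≤ K * R := mul_le_mul hK' (hR t ht) (norm_nonneg _) ((norm_nonneg _).trans hK')
  refine hx ⟨max R (C * (K * R)), fun u => ?_⟩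
  by_cases hu : (u.map f).prod x ∈ boundedOrbit f
  · obtain ⟨s, ⟨v, rfl⟩, hs, hsR⟩ := last_entry u hu
    calc ‖((v ++ s).map f).prod x‖ = ‖(v.map f).prod ((s.map f).prod x)‖ := by simp
      _ ≤ C * ‖(s.map f).prod x‖ := hC _ hs v
      _ ≤ max R (C * (K * R)) := (mul_le_mul_of_nonneg_left hsR hC₀).trans (le_max_right _ _)
  · exact (hR u hu).trans (le_max_left _ _)

-- `((res j m).map f).prod = f (j (m - 1)) ∘ ⋯ ∘ f (j 0)` is the `m`-th left product along `j`.
theorem mem_boundedOrbit_of_forall_bounded_res [CompleteSpace 𝕜] [FiniteDimensional 𝕜 E]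
    (hf : IsBounded (range f))
    (hres : ∀ (j : ℕ → ι) (x : E), ∃ C, ∀ m, ‖((res j m).map f).prod x‖ ≤ C)
    (x : E) : x ∈ boundedOrbit f := by
  by_contra hx
  let s : ℕ → Set (List ι) := fun i =>
    {u | (u.map f).prod x ∉ boundedOrbit f ∧ (i : ℝ) ≤ ‖(u.map f).prod x‖}
  have hstep : ∀ i, ∀ u ∈ s i, ∃ v ≠ [], v ++ u ∈ s (i + 1) := by
    rintro i u ⟨hu, -⟩
    obtain ⟨v, hvR, hv⟩ := exists_le_norm_prod_map_apply_notMem_boundedOrbit hf hu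
      (max (i + 1) (‖(u.map f).prod x‖ + 1))
    refine ⟨v, ?_, by simpa using hv, by simpa using (le_max_left _ _).trans hvR⟩
    rintro rfl
    norm_num at hvR
  obtain ⟨j, hj⟩ := exists_forall_exists_res_mem s (by simpa [s] using hx) hstep
  obtain ⟨C, hC⟩ := hres j x
  obtain ⟨i, hi⟩ := exists_nat_gt C
  obtain ⟨m, -, hm⟩ := hj i
  exact (hi.trans_le hm).not_ge (hC m)

theorem exists_norm_prod_map_le_of_forall_bounded_res [CompleteSpace 𝕜] [FiniteDimensional 𝕜 E]
    (hf : IsBounded (range f))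
    (hres : ∀ (j : ℕ → ι) (x : E), ∃ C, ∀ m, ‖((res j m).map f).prod x‖ ≤ C) :
    ∃ C, ∀ l : List ι, ‖(l.map f).prod‖ ≤ C :=
  have := FiniteDimensional.complete 𝕜 E
  banach_steinhaus fun x => mem_boundedOrbit_of_forall_bounded_res hf hres x

end BoundedOrbit

theorem Matrix.norm_le_of_forall_norm_mulVec_le {𝕜 m n : Type*} [NormedRing 𝕜] [NormOneClass 𝕜]
    [Fintype m] [Fintype n] [DecidableEq n] {M : Matrix m n 𝕜} {C : ℝ} (hC : 0 ≤ C)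
    (h : ∀ x, ‖M *ᵥ x‖ ≤ C * ‖x‖) : ‖M‖ ≤ C := by
  refine (Matrix.norm_le_iff hC).mpr fun i j => ?_
  calc ‖M i j‖ = ‖(M *ᵥ Pi.single j 1) i‖ := by simp
    _ ≤ ‖M *ᵥ Pi.single j 1‖ := norm_le_pi_norm _ i
    _ ≤ C := by simpa [Pi.norm_single] using h (Pi.single j 1)

theorem leftProd_eq_prod_map_res {n k : ℕ} (A : Fin k → Matrix (Fin n) (Fin n) ℝ) (j : ℕ → Fin k)
    (m : ℕ) : leftProd A j m = ((res j m).map A).prod := by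
  induction m with
  | zero => rfl
  | succ m ih => simp [leftProd, ih]

/-- if Σ is LCP then Σ is product bounded: there is a `C > 0`
bounding the norm of every finite product of matrices from Σ (the empty
product, the identity matrix, included). -/
theorem lcp_product_bounded {n k : ℕ}
    (A : Fin k → Matrix (Fin n) (Fin n) ℝ) (hLCP : IsLCP A) :
    ∃ C : ℝ, 0 < C ∧ ∀ l : List (Fin k), ‖(l.map A).prod‖ < C := by
  let f (a : Fin k) : (Fin n → ℝ) →L[ℝ] (Fin n → ℝ) :=
    LinearMap.toContinuousLinearMap (A a).mulVecLin
  have hprod_apply (l : List (Fin k)) (x : Fin n → ℝ) : (l.map f).prod x = (l.map A).prod *ᵥ x := by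
    induction l with
    | nil => simp
    | cons a l ih => simp [ih, f, Matrix.mulVec_mulVec]
  have hres (j : ℕ → Fin k) (x : Fin n → ℝ) : ∃ C, ∀ m, ‖((res j m).map f).prod x‖ ≤ C := by
    obtain ⟨L, hL⟩ := hLCP j
    obtain ⟨C, hC⟩ := isBounded_iff_forall_norm_le.mp <| Metric.isBounded_range_of_tendsto _
      (((continuous_id.matrix_mulVec continuous_const).tendsto L).comp hL)
    exact ⟨C, fun m => by simpa [hprod_apply, leftProd_eq_prod_map_res] using hC _ (mem_range_self m)⟩
  obtain ⟨C, hC⟩ := exists_norm_prod_map_le_of_forall_bounded_res (finite_range f).isBounded hres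
  refine ⟨max C 0 + 1, by positivity, fun l => ?_⟩
  have hCl : ‖(l.map f).prod‖ ≤ max C 0 := (hC l).trans (le_max_left _ _)
  calc ‖(l.map A).prod‖ ≤ max C 0 :=
        Matrix.norm_le_of_forall_norm_mulVec_le (le_max_right _ _) fun x => by
          rw [← hprod_apply]; exact (l.map f).prod.le_of_opNorm_le hCl x
    _ < max C 0 + 1 := lt_add_one _
end
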